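/- arXiv:2203.00855 — 2 statements merged into one kernel-verified Lean document; each statement's English description precedes it below -/
import Mathlib

section
/- Stretching Lemma, part (1): Let σ be a turn sequence with at least one turn. If a point p = (a,b) with a ≠ 0 and b ≠ 0 is reachable by σ (i.e., p ∈ A(σ)), then the entire quadrant Q⁺(p) is contained in A(σ). -/
/-- A turn: left (`L`) or right (`R`). -/
inductive Turn : Type
  | L : Turn
  | R : Turn
  deriving DecidableEq

/-- Rotation of a direction vector by 90° counterclockwise. -/
def rotCCW (d : ℤ × ℤ) : ℤ × ℤ := (-d.2, d.1)

/-- Rotation of a direction vector by 90° clockwise. -/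
def rotCW (d : ℤ × ℤ) : ℤ × ℤ := (d.2, -d.1)

/-- Unit direction of the axis-parallel segment from `u` to `v`. -/
def unitDir (u v : ℤ × ℤ) : ℤ × ℤ := ((v.1 - u.1).sign, (v.2 - u.2).sign)

/-- The set of integer points on the axis-parallel closed segment from `u` to `v`. -/
def segSet (u v : ℤ × ℤ) : Set (ℤ × ℤ) :=
  {q | min u.1 v.1 ≤ q.1 ∧ q.1 ≤ max u.1 v.1 ∧ min u.2 v.2 ≤ q.2 ∧ q.2 ≤ max u.2 v.2}

/-- A simple rectilinear chain realizing the turn sequence `σ = σ₁⋯σₙ` (as a list,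
`σ.get ⟨i, _⟩` is the `(i+1)`-st turn `σ_{i+1}`).  It consists of the points
`pts 0, …, pts (n+1)` with `pts 0 = (0,0)`; consecutive points span nondegenerate
axis-parallel segments, the first segment heads east, the chain turns left (CCW) or
right (CW) at each bend as prescribed by `σ`, and the chain is simple. -/
structure Chain (σ : List Turn) where
  pts : ℕ → ℤ × ℤ
  start_eq : pts 0 = (0, 0)
  first_seg : ∃ t : ℤ, 0 < t ∧ pts 1 = (t, 0)
  axis_parallel : ∀ i ≤ σ.length,
    ((pts (i + 1)).1 = (pts i).1 ∧ (pts (i + 1)).2 ≠ (pts i).2) ∨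
    ((pts (i + 1)).2 = (pts i).2 ∧ (pts (i + 1)).1 ≠ (pts i).1)
  turns : ∀ i, ∀ h : i < σ.length,
    unitDir (pts (i + 1)) (pts (i + 2)) =
      (if σ.get ⟨i, h⟩ = Turn.L then rotCCW else rotCW) (unitDir (pts i) (pts (i + 1)))
  simple_adj : ∀ i, i + 1 ≤ σ.length →
    segSet (pts i) (pts (i + 1)) ∩ segSet (pts (i + 1)) (pts (i + 2)) = {pts (i + 1)}
  simple_nonadj : ∀ i j, i + 1 < j → j ≤ σ.length →
    segSet (pts i) (pts (i + 1)) ∩ segSet (pts j) (pts (j + 1)) = ∅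

/-- `A(σ)`: the set of points reachable by the turn sequence `σ`. -/
def ReachSet (σ : List Turn) : Set (ℤ × ℤ) :=
  {q | ∃ C : Chain σ, C.pts (σ.length + 1) = q}

/-- The halfplane `V⁺(p)` (requires `p.1 ≠ 0` to be meaningful). -/
def Vplus (p : ℤ × ℤ) : Set (ℤ × ℤ) :=
  {q | ∃ i j : ℤ, 0 ≤ i ∧ q = (p.1 + p.1.sign * i, j)}

/-- The halfplane `H⁺(p)` (requires `p.2 ≠ 0` to be meaningful). -/
def Hplus (p : ℤ × ℤ) : Set (ℤ × ℤ) :=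
  {q | ∃ i j : ℤ, 0 ≤ j ∧ q = (i, p.2 + p.2.sign * j)}

/-- The quadrant `Q⁺(p)`. -/
def Qplus (p : ℤ × ℤ) : Set (ℤ × ℤ) := Vplus p ∩ Hplus p

/-- A staircase: consecutive turns always differ. -/
def IsStaircase (σ : List Turn) : Prop := σ.Chain' (· ≠ ·)

/-- The prefix number `δᵢ`: number of `L`s minus number of `R`s among the first `i` turns. -/
def delta (σ : List Turn) (i : ℕ) : ℤ :=
  ((σ.take i).count Turn.L : ℤ) - ((σ.take i).count Turn.R : ℤ)

/-- The excess number `l - r` of a turn sequence. -/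
def excess (σ : List Turn) : ℤ := (σ.count Turn.L : ℤ) - (σ.count Turn.R : ℤ)

/-- `σ` has a hook (two equal consecutive turns, at 1-based positions `k+1, k+2`)
whose prefix number is `≡ d (mod 4)`: `d = 0, 1, 2, 3` for right, up, left, down hooks. -/
def HasHook (σ : List Turn) (d : ℤ) : Prop :=
  ∃ k, ∃ h : k + 1 < σ.length,
    σ.get ⟨k, by omega⟩ = σ.get ⟨k + 1, h⟩ ∧ delta σ (k + 1) % 4 = d

/-- `σ` has some hook, i.e. two equal consecutive turns. -/
def HasAnyHook (σ : List Turn) : Prop :=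
  ∃ k, ∃ h : k + 1 < σ.length, σ.get ⟨k, by omega⟩ = σ.get ⟨k + 1, h⟩

/-- A set `S ⊆ ℤ²` is connected: any two points of `S` are joined by a path inside `S`
whose consecutive points are at `L¹`-distance `1`. -/
def GridConnected (S : Set (ℤ × ℤ)) : Prop :=
  ∀ p ∈ S, ∀ q ∈ S, ∃ (n : ℕ) (f : ℕ → ℤ × ℤ),
    f 0 = p ∧ f n = q ∧ (∀ i ≤ n, f i ∈ S) ∧
    ∀ i < n, |(f (i + 1)).1 - (f i).1| + |(f (i + 1)).2 - (f i).2| = 1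

/-- `q` lies on the boundary of the smallest axis-parallel bounding box of the chain `C`
(for `q` a point of the chain: it attains an extreme coordinate). -/
def OnBBoxBoundary (σ : List Turn) (C : Chain σ) (q : ℤ × ℤ) : Prop :=
  (∀ i ≤ σ.length + 1, q.1 ≤ (C.pts i).1) ∨ (∀ i ≤ σ.length + 1, (C.pts i).1 ≤ q.1) ∨
  (∀ i ≤ σ.length + 1, q.2 ≤ (C.pts i).2) ∨ (∀ i ≤ σ.length + 1, (C.pts i).2 ≤ q.2)

/-- The last segment of the chain `C` is entirely contained in one side of the smallest
axis-parallel bounding box of `C`. -/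
def LastSegOnSide (σ : List Turn) (C : Chain σ) : Prop :=
  ((C.pts σ.length).1 = (C.pts (σ.length + 1)).1 ∧
     ∀ i ≤ σ.length + 1, (C.pts σ.length).1 ≤ (C.pts i).1) ∨
  ((C.pts σ.length).1 = (C.pts (σ.length + 1)).1 ∧
     ∀ i ≤ σ.length + 1, (C.pts i).1 ≤ (C.pts σ.length).1) ∨
  ((C.pts σ.length).2 = (C.pts (σ.length + 1)).2 ∧
     ∀ i ≤ σ.length + 1, (C.pts σ.length).2 ≤ (C.pts i).2) ∨
  ((C.pts σ.length).2 = (C.pts (σ.length + 1)).2 ∧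
     ∀ i ≤ σ.length + 1, (C.pts i).2 ≤ (C.pts σ.length).2)

/-- The turn `σₘ` (1-based indexing). -/
def turnAt (σ : List Turn) (m : ℕ) : Turn := σ.getD (m - 1) Turn.L

/-- The suffix `σ_k ⋯ σ_n` contains no hook and all its prefix numbers `δᵢ`,
`k - 1 ≤ i ≤ n`, are `≡ 1` or `2 (mod 4)` (the combinatorial description of a
NW-staircase containing the endpoint). -/
def GoodSuffix (σ : List Turn) (k : ℕ) : Prop :=
  1 ≤ k ∧ k ≤ σ.length ∧
  (∀ m : ℕ, k ≤ m → m < σ.length → turnAt σ m ≠ turnAt σ (m + 1)) ∧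
  (∀ i : ℕ, k - 1 ≤ i → i ≤ σ.length → delta σ i % 4 = 1 ∨ delta σ i % 4 = 2)

open Classical in
/-- `₋ₓm₊ᵧᵖ(σ)`: taking the longest good suffix (i.e. the least `k` with
`GoodSuffix σ k`), the number of indices `i` with `k - 1 ≤ i ≤ n` and
`δᵢ ≡ 1 (mod 4)`; `0` if no good suffix exists. -/
noncomputable def mNWp (σ : List Turn) : ℕ :=
  if ∃ k, GoodSuffix σ k then
    Nat.card {i : ℕ // sInf {k | GoodSuffix σ k} - 1 ≤ i ∧ i ≤ σ.length ∧
      delta σ i % 4 = 1}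
  else 0

/-- The number of vertical segments of the chain `C` meeting the closed horizontal
segment from the origin to `(a, 0)`. -/
def verticalCrossCount (σ : List Turn) (C : Chain σ) (a : ℤ) : ℕ :=
  ((Finset.range (σ.length + 1)).filter fun i =>
    (C.pts i).1 = (C.pts (i + 1)).1 ∧
    0 ≤ (C.pts i).1 ∧ (C.pts i).1 ≤ a ∧
    min (C.pts i).2 (C.pts (i + 1)).2 ≤ 0 ∧ 0 ≤ max (C.pts i).2 (C.pts (i + 1)).2).card

/-- The unit direction of the `(i+1)`-st segment of the chain `C`. -/
def dirOf (σ : List Turn) (C : Chain σ) (i : ℕ) : ℤ × ℤ := unitDir (C.pts i) (C.pts (i + 1))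

/-- `z₁mz₂ᵒ(C)`: the number of `z₂`-segments in the maximal `(z₁,z₂)`-staircase subchain
of `C` containing the origin (the longest prefix of segments directed `z₁` or `z₂`);
`0` if no such subchain exists. -/
noncomputable def stairCountO (σ : List Turn) (C : Chain σ) (z₁ z₂ : ℤ × ℤ) : ℕ :=
  Nat.card {i : ℕ // i ≤ σ.length ∧ dirOf σ C i = z₂ ∧
    ∀ j ≤ i, dirOf σ C j = z₁ ∨ dirOf σ C j = z₂}

/-- `z₁mz₂ᵖ(C)`: the number of `z₂`-segments in the maximal `(z₁,z₂)`-staircase subchain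
of `C` containing the endpoint (the longest suffix of segments directed `z₁` or `z₂`);
`0` if no such subchain exists. -/
noncomputable def stairCountP (σ : List Turn) (C : Chain σ) (z₁ z₂ : ℤ × ℤ) : ℕ :=
  Nat.card {i : ℕ // i ≤ σ.length ∧ dirOf σ C i = z₂ ∧
    ∀ j, i ≤ j → j ≤ σ.length → dirOf σ C j = z₁ ∨ dirOf σ C j = z₂}


/-! Composing a realizing chain with strictly monotone maps of the two coordinates that fix `0`
yields again a realizing chain: such maps preserve the sign of every coordinate difference,
hence the segment directions and turns, and the order of the endpoints of coordinate intervals,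
hence which segments meet and where. The map that fixes everything on the origin's side of `a`
and shifts `a` and everything beyond it by `i` away from the origin sends `a` to `a + sgn(a)·i`;
stretching both coordinates this way moves the endpoint `(a, b)` to any point of `Q⁺((a, b))`. -/

open Set

lemma Set.prod_eq_singleton_iff {α β : Type*} {s : Set α} {t : Set β} {a : α} {b : β} :
    s ×ˢ t = {(a, b)} ↔ s = {a} ∧ t = {b} := by
  rw [← singleton_prod_singleton, eq_comm, prod_eq_prod_iff_of_nonempty (by simp)]
  exact and_congr eq_comm eq_comm

section StrictMonoIntervals

variable {α β : Type*} [LinearOrder α] [LinearOrder β] {g : α → β}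

lemma Set.uIcc_inter_uIcc_eq_Icc (a b c d : α) :
    uIcc a b ∩ uIcc c d = Icc (max (min a b) (min c d)) (min (max a b) (max c d)) :=
  Icc_inter_Icc

lemma StrictMono.uIcc_inter_uIcc (hg : StrictMono g) (a b c d : α) :
    uIcc (g a) (g b) ∩ uIcc (g c) (g d) =
      Icc (g (max (min a b) (min c d))) (g (min (max a b) (max c d))) := by
  simp only [uIcc_inter_uIcc_eq_Icc, hg.monotone.map_max, hg.monotone.map_min]

lemma StrictMono.uIcc_inter_uIcc_eq_empty_iff (hg : StrictMono g) {a b c d : α} :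
    uIcc (g a) (g b) ∩ uIcc (g c) (g d) = ∅ ↔ uIcc a b ∩ uIcc c d = ∅ := by
  rw [hg.uIcc_inter_uIcc, uIcc_inter_uIcc_eq_Icc, Icc_eq_empty_iff, Icc_eq_empty_iff,
    hg.le_iff_le]

lemma StrictMono.uIcc_inter_uIcc_eq_singleton_iff (hg : StrictMono g) {a b c d p : α} :
    uIcc (g a) (g b) ∩ uIcc (g c) (g d) = {g p} ↔ uIcc a b ∩ uIcc c d = {p} := by
  rw [hg.uIcc_inter_uIcc, uIcc_inter_uIcc_eq_Icc, Icc_eq_singleton_iff, Icc_eq_singleton_iff,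
    hg.injective.eq_iff, hg.injective.eq_iff]

end StrictMonoIntervals

lemma StrictMono.sign_sub {g : ℤ → ℤ} (hg : StrictMono g) (x y : ℤ) :
    (g y - g x).sign = (y - x).sign := by
  rcases lt_trichotomy x y with h | rfl | h
  · rw [Int.sign_eq_one_of_pos (sub_pos.2 (hg h)), Int.sign_eq_one_of_pos (sub_pos.2 h)]
  · simp
  · rw [Int.sign_eq_neg_one_of_neg (sub_neg.2 (hg h)), Int.sign_eq_neg_one_of_neg (sub_neg.2 h)]

lemma segSet_eq_uIcc_prod_uIcc (u v : ℤ × ℤ) : segSet u v = uIcc u.1 v.1 ×ˢ uIcc u.2 v.2 :=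
  ext fun _ => and_assoc.symm

section StrictMonoProdMap

variable {g₁ g₂ : ℤ → ℤ}

lemma segSet_prodMap (u v : ℤ × ℤ) :
    segSet (Prod.map g₁ g₂ u) (Prod.map g₁ g₂ v) =
      uIcc (g₁ u.1) (g₁ v.1) ×ˢ uIcc (g₂ u.2) (g₂ v.2) :=
  segSet_eq_uIcc_prod_uIcc _ _

lemma segSet_prodMap_inter_eq_empty_iff (h₁ : StrictMono g₁) (h₂ : StrictMono g₂)
    {u v u' v' : ℤ × ℤ} :
    segSet (Prod.map g₁ g₂ u) (Prod.map g₁ g₂ v) ∩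
        segSet (Prod.map g₁ g₂ u') (Prod.map g₁ g₂ v') = ∅ ↔
      segSet u v ∩ segSet u' v' = ∅ := by
  rw [segSet_prodMap, segSet_prodMap, segSet_eq_uIcc_prod_uIcc, segSet_eq_uIcc_prod_uIcc,
    prod_inter_prod, prod_inter_prod, prod_eq_empty_iff, prod_eq_empty_iff,
    h₁.uIcc_inter_uIcc_eq_empty_iff, h₂.uIcc_inter_uIcc_eq_empty_iff]

lemma segSet_prodMap_inter_eq_singleton_iff (h₁ : StrictMono g₁) (h₂ : StrictMono g₂)
    {u v u' v' p : ℤ × ℤ} :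
    segSet (Prod.map g₁ g₂ u) (Prod.map g₁ g₂ v) ∩
        segSet (Prod.map g₁ g₂ u') (Prod.map g₁ g₂ v') = {Prod.map g₁ g₂ p} ↔
      segSet u v ∩ segSet u' v' = {p} := by
  obtain ⟨p₁, p₂⟩ := p
  rw [segSet_prodMap, segSet_prodMap, segSet_eq_uIcc_prod_uIcc, segSet_eq_uIcc_prod_uIcc,
    prod_inter_prod, prod_inter_prod, Prod.map_apply, prod_eq_singleton_iff,
    prod_eq_singleton_iff, h₁.uIcc_inter_uIcc_eq_singleton_iff,
    h₂.uIcc_inter_uIcc_eq_singleton_iff]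

lemma unitDir_prodMap (h₁ : StrictMono g₁) (h₂ : StrictMono g₂) (u v : ℤ × ℤ) :
    unitDir (Prod.map g₁ g₂ u) (Prod.map g₁ g₂ v) = unitDir u v := by
  simp only [unitDir, Prod.map_fst, Prod.map_snd, h₁.sign_sub, h₂.sign_sub]

def Chain.map {σ : List Turn} (C : Chain σ) (h₁ : StrictMono g₁) (h₂ : StrictMono g₂)
    (z₁ : g₁ 0 = 0) (z₂ : g₂ 0 = 0) : Chain σ where
  pts i := Prod.map g₁ g₂ (C.pts i)
  start_eq := by simp [C.start_eq, z₁, z₂]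
  first_seg := by
    obtain ⟨t, ht, he⟩ := C.first_seg
    exact ⟨g₁ t, z₁ ▸ h₁ ht, by simp [he, z₂]⟩
  axis_parallel i hi := by
    rcases C.axis_parallel i hi with ⟨h, h'⟩ | ⟨h, h'⟩
    · exact Or.inl ⟨congrArg g₁ h, h₂.injective.ne h'⟩
    · exact Or.inr ⟨congrArg g₂ h, h₁.injective.ne h'⟩
  turns i hi := by
    simp only [unitDir_prodMap h₁ h₂]
    exact C.turns i hi
  simple_adj i hi := (segSet_prodMap_inter_eq_singleton_iff h₁ h₂).2 (C.simple_adj i hi)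
  simple_nonadj i j hij hj :=
    (segSet_prodMap_inter_eq_empty_iff h₁ h₂).2 (C.simple_nonadj i j hij hj)

lemma prodMap_mem_reachSet {σ : List Turn} {q : ℤ × ℤ} (hq : q ∈ ReachSet σ)
    (h₁ : StrictMono g₁) (h₂ : StrictMono g₂) (z₁ : g₁ 0 = 0) (z₂ : g₂ 0 = 0) :
    Prod.map g₁ g₂ q ∈ ReachSet σ := by
  obtain ⟨C, rfl⟩ := hq
  exact ⟨C.map h₁ h₂ z₁ z₂, rfl⟩

end StrictMonoProdMap

def stretchAt (c s x : ℤ) : ℤ :=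
  if 0 < c then (if c ≤ x then x + s else x) else (if x ≤ c then x - s else x)

lemma stretchAt_strictMono (c : ℤ) {s : ℤ} (hs : 0 ≤ s) : StrictMono (stretchAt c s) := by
  intro x y hxy
  unfold stretchAt
  split_ifs <;> omega

lemma stretchAt_zero {c : ℤ} (hc : c ≠ 0) (s : ℤ) : stretchAt c s 0 = 0 := by
  unfold stretchAt
  split_ifs <;> omega

lemma stretchAt_self {c : ℤ} (hc : c ≠ 0) (s : ℤ) : stretchAt c s c = c + c.sign * s := by
  unfold stretchAt
  rcases hc.lt_or_gt with h | h
  · rw [Int.sign_eq_neg_one_of_neg h, if_neg h.not_gt, if_pos le_rfl]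
    ring
  · rw [Int.sign_eq_one_of_pos h, if_pos h, if_pos le_rfl]
    ring

theorem stretching_lemma_quadrant_general (σ : List Turn)
    (a b : ℤ) (ha : a ≠ 0) (hb : b ≠ 0) (hp : (a, b) ∈ ReachSet σ) :
    Qplus (a, b) ⊆ ReachSet σ := by
  rintro _ ⟨⟨i, y, hi, rfl⟩, ⟨x, j, hj, hq⟩⟩
  obtain rfl : y = b + b.sign * j := congrArg Prod.snd hq
  have := prodMap_mem_reachSet hp (stretchAt_strictMono a hi) (stretchAt_strictMono b hj)
    (stretchAt_zero ha i) (stretchAt_zero hb j)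
  rwa [Prod.map_apply, stretchAt_self ha, stretchAt_self hb] at this

/-- **Stretching Lemma, part (1).** If `σ` has at least one turn and `(a, b)` with
`a ≠ 0`, `b ≠ 0` is reachable by `σ`, then the whole quadrant `Q⁺((a,b))` is
contained in `A(σ)`. -/
theorem stretching_lemma_quadrant (σ : List Turn) (hσ : 1 ≤ σ.length)
    (a b : ℤ) (ha : a ≠ 0) (hb : b ≠ 0) (hp : (a, b) ∈ ReachSet σ) :
    Qplus (a, b) ⊆ ReachSet σ :=
  stretching_lemma_quadrant_general σ a b ha hb hp
end

section
/- Reachable set of staircases: If σ is the empty turn sequence (n = 0), then A(σ) = {(a,0) : a ∈ ℤ, a ≥ 1}. If σ is a staircase of length n ≥ 1 with σ₁ = L, then A(σ) = Q⁺((1 + ⌊n/2⌋, ⌈n/2⌉)); if σ is a staircase of length n ≥ 1 with σ₁ = R, then A(σ) = Q⁺((1 + ⌊n/2⌋, −⌈n/2⌉)). -/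
/-! In a chain realizing a staircase the directions of the segments are forced: they alternate
between east and north when `σ₁ = L`, and between east and south when `σ₁ = R`. As every segment
has length at least one, the endpoint lies in the stated quadrant. Conversely, lengthening the
first two segments of the staircase with unit segments reaches every point of the quadrant, and a
chain that is monotone in both coordinates is automatically simple. -/

def Turn.sign : Turn → ℤ
  | .L => 1
  | .R => -1

lemma Turn.sign_eq_one_or_neg_one (t : Turn) : t.sign = 1 ∨ t.sign = -1 := by
  cases t <;> simp [Turn.sign]

def AlternatesFrom (σ : List Turn) (s : Turn) : Prop :=
  ∀ i (hi : i < σ.length), σ[i] = s ↔ i % 2 = 0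

lemma IsStaircase.alternatesFrom {σ : List Turn} {s : Turn} (hσ : IsStaircase σ)
    (hs : σ.head? = some s) : AlternatesFrom σ s := by
  intro i hi
  induction i with
  | zero => cases σ <;> simp_all
  | succ i ih =>
    have hne : σ[i] ≠ σ[i + 1] := List.isChain_iff_getElem.mp hσ i hi
    have hflip : σ[i + 1] = s ↔ σ[i] ≠ s := by
      generalize σ[i] = a, σ[i + 1] = b at hne
      cases a <;> cases b <;> cases s <;> simp_all
    rw [hflip, Ne, ih (by omega)]
    omega

def stairDir (ε : ℤ) (m : ℕ) : ℤ × ℤ := if m % 2 = 0 then (1, 0) else (0, ε)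

lemma unitDir_eq_stairDir_iff {ε : ℤ} (hε : ε = 1 ∨ ε = -1) (u v : ℤ × ℤ) (m : ℕ) :
    unitDir u v = stairDir ε m ↔
      (m % 2 = 0 ∧ u.1 < v.1 ∧ v.2 = u.2) ∨ (m % 2 = 1 ∧ v.1 = u.1 ∧ ε * u.2 < ε * v.2) := by
  rcases Nat.mod_two_eq_zero_or_one m with hm | hm <;> rcases hε with rfl | rfl <;>
    simp [unitDir, stairDir, hm, Int.sign_eq_one_iff_pos, Int.sign_eq_neg_one_iff_neg,
      Int.sign_eq_zero_iff_zero, sub_eq_zero]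

lemma AlternatesFrom.rotate_stairDir {σ : List Turn} {s : Turn} (hσ : AlternatesFrom σ s)
    {i : ℕ} (hi : i < σ.length) :
    (if σ[i] = Turn.L then rotCCW else rotCW) (stairDir s.sign i) = stairDir s.sign (i + 1) := by
  have := hσ i hi
  generalize σ[i] = t at this
  rcases Nat.mod_two_eq_zero_or_one i with hm | hm <;> cases s <;> cases t <;>
    simp_all [stairDir, rotCCW, rotCW, Turn.sign] <;> omega

def IsStairPath (ε : ℤ) (P : ℕ → ℤ × ℤ) (k : ℕ) : Prop :=
  ∀ m < k, unitDir (P m) (P (m + 1)) = stairDir ε m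

namespace IsStairPath

variable {ε : ℤ} {P : ℕ → ℤ × ℤ} {k : ℕ}

/-- Between `P i` and `P j` there are `⌈j/2⌉ - ⌈i/2⌉` horizontal and `⌊j/2⌋ - ⌊i/2⌋` vertical
segments, each of length at least one. -/
lemma coords_le (hε : ε = 1 ∨ ε = -1) (hP : IsStairPath ε P k) {i j : ℕ} (hij : i ≤ j)
    (hjk : j ≤ k) :
    (P i).1 + ((j + 1) / 2 : ℕ) ≤ (P j).1 + ((i + 1) / 2 : ℕ) ∧
      ε * (P i).2 + (j / 2 : ℕ) ≤ ε * (P j).2 + (i / 2 : ℕ) := by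
  induction j, hij using Nat.le_induction with
  | base => omega
  | succ j hij ih =>
    have := (unitDir_eq_stairDir_iff hε _ _ j).mp (hP j (by omega))
    have := ih (by omega)
    rcases hε with rfl | rfl <;> omega

lemma segSet_inter_segSet_succ (hε : ε = 1 ∨ ε = -1) (hP : IsStairPath ε P k) {i : ℕ}
    (hi : i + 2 ≤ k) :
    segSet (P i) (P (i + 1)) ∩ segSet (P (i + 1)) (P (i + 2)) = {P (i + 1)} := by
  have h₁ := hP.coords_le hε (Nat.le_add_right i 1) (by omega)
  have h₂ := hP.coords_le hε (show i + 1 ≤ i + 2 by omega) hi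
  ext q
  simp only [Set.mem_inter_iff, segSet, Set.mem_ofPred_eq, Set.mem_singleton_iff, Prod.ext_iff]
  rcases hε with rfl | rfl <;> omega

lemma segSet_inter_segSet_eq_empty (hε : ε = 1 ∨ ε = -1) (hP : IsStairPath ε P k) {i j : ℕ}
    (hij : i + 1 < j) (hj : j + 1 ≤ k) :
    segSet (P i) (P (i + 1)) ∩ segSet (P j) (P (j + 1)) = ∅ := by
  have h₁ := hP.coords_le hε (Nat.le_add_right i 1) (by omega)
  have h₂ := hP.coords_le hε (show i + 1 ≤ j by omega) (by omega)
  have h₃ := hP.coords_le hε (Nat.le_add_right j 1) hj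
  ext q
  simp only [Set.mem_inter_iff, segSet, Set.mem_ofPred_eq, Set.mem_empty_iff_false, iff_false]
  rcases hε with rfl | rfl <;> omega

end IsStairPath

lemma Chain.isStairPath {σ : List Turn} {s : Turn} (hσ : AlternatesFrom σ s) (C : Chain σ) :
    IsStairPath s.sign C.pts (σ.length + 1) := by
  intro m hm
  induction m with
  | zero =>
    obtain ⟨t, ht, h1⟩ := C.first_seg
    simp [unitDir, stairDir, C.start_eq, h1, Int.sign_eq_one_iff_pos.mpr ht]
  | succ m ih =>
    rw [C.turns m (by omega), ih (by omega)]
    simpa using hσ.rotate_stairDir (by omega)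

def Chain.ofStairPath {σ : List Turn} {s : Turn} (hσ : AlternatesFrom σ s) (P : ℕ → ℤ × ℤ)
    (h0 : P 0 = (0, 0)) (hP : IsStairPath s.sign P (σ.length + 1)) : Chain σ where
  pts := P
  start_eq := h0
  first_seg := by
    have := (unitDir_eq_stairDir_iff s.sign_eq_one_or_neg_one _ _ 0).mp (hP 0 (by omega))
    exact ⟨(P 1).1, by simp_all, Prod.ext rfl (by simp_all)⟩
  axis_parallel i hi := by
    have := (unitDir_eq_stairDir_iff s.sign_eq_one_or_neg_one _ _ i).mp (hP i (by omega))
    rcases s.sign_eq_one_or_neg_one with h | h <;> rw [h] at this <;> omega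
  turns i hi := by
    rw [hP (i + 1) (by omega), hP i (by omega)]
    simpa using (hσ.rotate_stairDir hi).symm
  simple_adj _ hi := hP.segSet_inter_segSet_succ s.sign_eq_one_or_neg_one (by omega)
  simple_nonadj _ _ hij hj :=
    hP.segSet_inter_segSet_eq_empty s.sign_eq_one_or_neg_one hij (by omega)

/-- The staircase with unit segments, except that the first one is longer by `a` and the second
one by `b`. -/
def stairPts (ε a b : ℤ) (m : ℕ) : ℤ × ℤ :=
  (((m + 1) / 2 : ℕ) + if 1 ≤ m then a else 0, ε * (((m / 2 : ℕ) : ℤ) + if 2 ≤ m then b else 0))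

lemma isStairPath_stairPts {ε a b : ℤ} (hε : ε = 1 ∨ ε = -1) (ha : 0 ≤ a) (hb : 0 ≤ b) (k : ℕ) :
    IsStairPath ε (stairPts ε a b) k := by
  intro m _
  rw [unitDir_eq_stairDir_iff hε]
  simp only [stairPts]
  rcases hε with rfl | rfl <;> split_ifs <;> omega

lemma mem_Qplus_iff {x y ε : ℤ} (hx : 0 < x) (hy : 0 < y) (hε : ε = 1 ∨ ε = -1) (q : ℤ × ℤ) :
    q ∈ Qplus (x, ε * y) ↔ x ≤ q.1 ∧ y ≤ ε * q.2 := by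
  have hsx : x.sign = 1 := Int.sign_eq_one_iff_pos.mpr hx
  have hsy : (ε * y).sign = ε := by
    rcases hε with rfl | rfl <;> simp [Int.sign_eq_one_iff_pos.mpr hy]
  simp only [Qplus, Vplus, Hplus, Set.mem_inter_iff, Set.mem_ofPred_eq, hsx, hsy, Prod.ext_iff]
  constructor
  · rintro ⟨⟨i, j, hi, hi₁, -⟩, ⟨-, j', hj', -, hj₂⟩⟩
    rcases hε with rfl | rfl <;> omega
  · rintro ⟨h₁, h₂⟩
    refine ⟨⟨q.1 - x, q.2, by omega, by omega, rfl⟩, ⟨q.1, ε * q.2 - y, by omega, rfl, ?_⟩⟩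
    rcases hε with rfl | rfl <;> omega

lemma reachSet_nil : ReachSet [] = {q : ℤ × ℤ | ∃ a : ℤ, 1 ≤ a ∧ q = (a, 0)} := by
  ext q
  constructor
  · rintro ⟨C, rfl⟩
    obtain ⟨t, ht, h1⟩ := C.first_seg
    exact ⟨t, ht, h1⟩
  · rintro ⟨a, ha, rfl⟩
    have hσ : AlternatesFrom [] Turn.L := nofun
    exact ⟨.ofStairPath hσ (stairPts 1 (a - 1) 0) (by simp [stairPts])
      (isStairPath_stairPts (.inl rfl) (by omega) le_rfl _), by simp [Chain.ofStairPath, stairPts]⟩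

theorem IsStaircase.reachSet_eq_Qplus {σ : List Turn} {s : Turn} (hσ : IsStaircase σ)
    (hs : σ.head? = some s) :
    ReachSet σ = Qplus (((1 + σ.length / 2 : ℕ) : ℤ), s.sign * (((σ.length + 1) / 2 : ℕ) : ℤ)) := by
  have hε := s.sign_eq_one_or_neg_one
  have hn : 1 ≤ σ.length := by cases σ <;> simp_all
  ext q
  rw [mem_Qplus_iff (by omega) (by omega) hε]
  constructor
  · rintro ⟨C, rfl⟩
    have := (C.isStairPath (hσ.alternatesFrom hs)).coords_le hε (Nat.zero_le _) le_rfl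
    rw [C.start_eq] at this
    omega
  · rintro ⟨hx, hy⟩
    refine ⟨.ofStairPath (hσ.alternatesFrom hs)
      (stairPts s.sign (q.1 - (1 + σ.length / 2 : ℕ)) (s.sign * q.2 - ((σ.length + 1) / 2 : ℕ)))
      (by simp [stairPts]) (isStairPath_stairPts hε (by omega) (by omega) _), ?_⟩
    simp only [Chain.ofStairPath, stairPts, Prod.ext_iff]
    rcases hε with h | h <;> rw [h] <;> constructor <;> split_ifs <;> omega

/-- **Reachable set of staircases.** For the empty sequence, `A(σ)` is the set of
points `(a, 0)` with `a ≥ 1`; for a nonempty staircase starting with `L`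
(resp. `R`), `A(σ) = Q⁺((1 + ⌊n/2⌋, ⌈n/2⌉))` (resp. `Q⁺((1 + ⌊n/2⌋, -⌈n/2⌉))`). -/
theorem staircase_reachable_set (σ : List Turn) :
    (σ = [] → ReachSet σ = {q : ℤ × ℤ | ∃ a : ℤ, 1 ≤ a ∧ q = (a, 0)}) ∧
    (IsStaircase σ → 1 ≤ σ.length → σ.head? = some Turn.L →
      ReachSet σ =
        Qplus (((1 + σ.length / 2 : ℕ) : ℤ), (((σ.length + 1) / 2 : ℕ) : ℤ))) ∧
    (IsStaircase σ → 1 ≤ σ.length → σ.head? = some Turn.R →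
      ReachSet σ =
        Qplus (((1 + σ.length / 2 : ℕ) : ℤ), -(((σ.length + 1) / 2 : ℕ) : ℤ))) := by
  refine ⟨fun h => h ▸ reachSet_nil, fun hσ _ hs => ?_, fun hσ _ hs => ?_⟩
  · simpa [Turn.sign] using hσ.reachSet_eq_Qplus hs
  · simpa [Turn.sign] using hσ.reachSet_eq_Qplus hs
end
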